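/- arXiv:2110.08649 — 3 statements merged into one kernel-verified Lean document; each statement's English description precedes it below -/
import Mathlib

section
/- Let G be a group and R : G → O(n) an orthogonal representation of G on ℝⁿ (so each R_g is a linear isometry of ℝⁿ). Let φ : ℝⁿ → ℝⁿ be a C¹ diffeomorphism that is G-equivariant, i.e., φ(R_g x) = R_g φ(x) for all g and x. Let q : ℝⁿ → ℝ≥0 be a G-invariant function, i.e., q(R_g x) = q(x) for all g, x. Define p : ℝⁿ → ℝ≥0 by p(y) = q(φ⁻¹(y)) · |det Dφ⁻¹(y)|, where Dφ⁻¹(y) is the Fréchet derivative of φ⁻¹ at y. Then p is G-invariant: p(R_g y) = p(y) for all g ∈ G and y ∈ ℝⁿ. -/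
theorem ContinuousLinearMap.det_fderiv_apply_of_semiconj {𝕜 E : Type*}
    [NontriviallyNormedField 𝕜] [NormedAddCommGroup E] [NormedSpace 𝕜 E]
    (A : E ≃L[𝕜] E) {f : E → E} (hf : Function.Semiconj f A A) (x : E) :
    (fderiv 𝕜 f (A x)).det = (fderiv 𝕜 f x).det := by
  -- Composition with a linear equivalence commutes with `fderiv` even where `f` is not
  -- differentiable (both sides are then `0`).
  have hchain :
      (fderiv 𝕜 f (A x)).comp (A : E →L[𝕜] E) = (A : E →L[𝕜] E).comp (fderiv 𝕜 f x) := by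
    rw [← A.comp_right_fderiv, ← A.comp_fderiv, hf.comp_eq]
  have hconj : fderiv 𝕜 f (A x) =
      (A : E →L[𝕜] E).comp ((fderiv 𝕜 f x).comp (A.symm : E →L[𝕜] E)) := by
    rw [← ContinuousLinearMap.comp_assoc, ← hchain, ContinuousLinearMap.comp_assoc,
      A.coe_comp_coe_symm, ContinuousLinearMap.comp_id]
  rw [hconj]
  exact LinearMap.det_conj (fderiv 𝕜 f x : E →ₗ[𝕜] E) A.toLinearEquiv

theorem pushforward_density_invariant_general
    {G : Type*} [Group G] {n : ℕ}
    (R : G →* (EuclideanSpace ℝ (Fin n) ≃ₗᵢ[ℝ] EuclideanSpace ℝ (Fin n)))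
    (φ φinv : EuclideanSpace ℝ (Fin n) → EuclideanSpace ℝ (Fin n))
    (hleft : Function.LeftInverse φinv φ) (hright : Function.RightInverse φinv φ)
    (hequiv : ∀ (g : G) (x : EuclideanSpace ℝ (Fin n)), φ (R g x) = R g (φ x))
    (q : EuclideanSpace ℝ (Fin n) → NNReal)
    (hq : ∀ (g : G) (x : EuclideanSpace ℝ (Fin n)), q (R g x) = q x)
    (p : EuclideanSpace ℝ (Fin n) → NNReal)
    (hp : ∀ y, (p y : ℝ) = (q (φinv y) : ℝ) * |(fderiv ℝ φinv y).det|) :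
    ∀ (g : G) (y : EuclideanSpace ℝ (Fin n)), p (R g y) = p y := by
  intro g y
  have hinv : Function.Semiconj φinv (R g) (R g) :=
    Function.Semiconj.inverse_left (hequiv g) hleft hright
  have hdet :=
    ContinuousLinearMap.det_fderiv_apply_of_semiconj (R g).toContinuousLinearEquiv hinv y
  apply NNReal.coe_injective
  rw [hp, hp, hinv.eq, hq, ← hdet]
  rfl

/-- Pushforward density of a `G`-invariant density under a `G`-equivariant
`C¹` diffeomorphism (for an orthogonal representation `R`) is `G`-invariant. -/
theorem pushforward_density_invariant
    {G : Type*} [Group G] {n : ℕ}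
    (R : G →* (EuclideanSpace ℝ (Fin n) ≃ₗᵢ[ℝ] EuclideanSpace ℝ (Fin n)))
    (φ φinv : EuclideanSpace ℝ (Fin n) → EuclideanSpace ℝ (Fin n))
    (hφ : ContDiff ℝ 1 φ) (hφinv : ContDiff ℝ 1 φinv)
    (hleft : Function.LeftInverse φinv φ) (hright : Function.RightInverse φinv φ)
    (hequiv : ∀ (g : G) (x : EuclideanSpace ℝ (Fin n)), φ (R g x) = R g (φ x))
    (q : EuclideanSpace ℝ (Fin n) → NNReal)
    (hq : ∀ (g : G) (x : EuclideanSpace ℝ (Fin n)), q (R g x) = q x)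
    (p : EuclideanSpace ℝ (Fin n) → NNReal)
    (hp : ∀ y, (p y : ℝ) = (q (φinv y) : ℝ) * |(fderiv ℝ φinv y).det|) :
    ∀ (g : G) (y : EuclideanSpace ℝ (Fin n)), p (R g y) = p y :=
  pushforward_density_invariant_general R φ φinv hleft hright hequiv q hq p hp
end

section
/- Let G be a group and d a positive integer, and suppose each g ∈ G acts on ℝᵈ by a permutation matrix R_g (i.e., via a homomorphism from G to the group of d × d permutation matrices). Let G act on ℝ²ᵈ = ℝᵈ × ℝᵈ diagonally: g•(x₁, x₂) = (R_g x₁, R_g x₂). Let s, t : ℝᵈ → ℝᵈ be G-equivariant: s(R_g x) = R_g s(x) and t(R_g x) = R_g t(x) for all g, x. Define the coupling layer C : ℝᵈ × ℝᵈ → ℝᵈ × ℝᵈ by C(x₁, x₂) = (x₁, x₂ ⊙ s(x₁) + t(x₁)), where ⊙ denotes componentwise (Hadamard) product. Then C is G-equivariant: C(g•(x₁, x₂)) = g•C(x₁, x₂) for all g ∈ G and (x₁, x₂) ∈ ℝᵈ × ℝᵈ. -/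
/-! Permuting coordinates is a ring endomorphism of `ℝᵈ` with componentwise `+` and `⊙`. The
coupling layer is built from `s` and `t` using only these operations, so it commutes with every
ring endomorphism that commutes with `s` and `t`. -/

/-- The linear action of a permutation on `ℝᵈ` given by its permutation matrix:
`(P_π x)_j = x_{π⁻¹(j)}`. -/
def permMatAction {d : ℕ} (π : Equiv.Perm (Fin d)) (x : Fin d → ℝ) : Fin d → ℝ :=
  fun j => x (π⁻¹ j)

def permMatRingHom {d : ℕ} (π : Equiv.Perm (Fin d)) : (Fin d → ℝ) →+* (Fin d → ℝ) :=
  RingHom.pi fun j => Pi.evalRingHom (fun _ => ℝ) (π⁻¹ j)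

def couplingLayer {R : Type*} [Add R] [Mul R] (s t : R → R) (x : R × R) : R × R :=
  (x.1, x.2 * s x.1 + t x.1)

theorem couplingLayer_prodMap {R F : Type*} [NonUnitalNonAssocSemiring R] [FunLike F R R]
    [NonUnitalRingHomClass F R R] (φ : F) (s t : R → R)
    (hs : ∀ x, s (φ x) = φ (s x)) (ht : ∀ x, t (φ x) = φ (t x)) (x : R × R) :
    couplingLayer s t (Prod.map φ φ x) = Prod.map φ φ (couplingLayer s t x) := by
  simp only [couplingLayer, Prod.map, hs, ht, map_add, map_mul]

/-- `G`-coupling layers are `G`-equivariant: if `G` acts on `ℝᵈ` by permutation matrices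
(via a homomorphism `ρ`), acts diagonally on `ℝ²ᵈ = ℝᵈ × ℝᵈ`, and `s, t : ℝᵈ → ℝᵈ` are
`G`-equivariant, then the coupling layer `C(x₁, x₂) = (x₁, x₂ ⊙ s(x₁) + t(x₁))` is
`G`-equivariant. -/
theorem g_coupling_layer_equivariant
    {G : Type*} [Group G] {d : ℕ}
    (ρ : G →* Equiv.Perm (Fin d))
    (s t : (Fin d → ℝ) → (Fin d → ℝ))
    (hs : ∀ (g : G) (x : Fin d → ℝ), s (permMatAction (ρ g) x) = permMatAction (ρ g) (s x))
    (ht : ∀ (g : G) (x : Fin d → ℝ), t (permMatAction (ρ g) x) = permMatAction (ρ g) (t x))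
    (C : (Fin d → ℝ) × (Fin d → ℝ) → (Fin d → ℝ) × (Fin d → ℝ))
    (hC : ∀ x₁ x₂ : Fin d → ℝ, C (x₁, x₂) = (x₁, x₂ * s x₁ + t x₁)) :
    ∀ (g : G) (x₁ x₂ : Fin d → ℝ),
      C (permMatAction (ρ g) x₁, permMatAction (ρ g) x₂)
        = (permMatAction (ρ g) (C (x₁, x₂)).1, permMatAction (ρ g) (C (x₁, x₂)).2) := by
  intro g x₁ x₂
  obtain rfl : C = couplingLayer s t := funext fun x => hC x.1 x.2
  -- `⇑(permMatRingHom π)` unfolds to `permMatAction π`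
  exact couplingLayer_prodMap (permMatRingHom (ρ g)) s t (hs g) (ht g) (x₁, x₂)
end

section
/- Let G be a group, d and k positive integers, n = k·d, and for each g ∈ G and each block index i ∈ {1, …, k} let R_g be a d × d permutation matrix given by a homomorphism from G into the d × d permutation matrices; let G act on ℝⁿ = (ℝᵈ)ᵏ blockwise by g•(x⁽¹⁾, …, x⁽ᵏ⁾) = (R_g x⁽¹⁾, …, R_g x⁽ᵏ⁾). For each i, let sᵢ, tᵢ : (ℝᵈ)^{i−1} → ℝᵈ be G-equivariant: sᵢ(R_g x⁽¹⁾, …, R_g x⁽ⁱ⁻¹⁾) = R_g sᵢ(x⁽¹⁾, …, x⁽ⁱ⁻¹⁾), and similarly for tᵢ. Define the inverse autoregressive flow layer I : (ℝᵈ)ᵏ → (ℝᵈ)ᵏ by I(x)⁽ⁱ⁾ = sᵢ(x⁽¹⁾, …, x⁽ⁱ⁻¹⁾) ⊙ x⁽ⁱ⁾ + tᵢ(x⁽¹⁾, …, x⁽ⁱ⁻¹⁾), where ⊙ is the componentwise product on ℝᵈ. Then I is G-equivariant: I(g•x) = g•I(x) for all g ∈ G and x ∈ (ℝᵈ)ᵏ.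 -/
/-- The blocks preceding block `i` of `x ∈ (ℝᵈ)ᵏ`. -/
def prevBlocks {d k : ℕ} (x : Fin k → Fin d → ℝ) (i : Fin k) :
    Fin i → Fin d → ℝ :=
  fun j => x (Fin.castLE i.isLt.le j)

theorem permMatAction_mul {d : ℕ} (π : Equiv.Perm (Fin d)) (x y : Fin d → ℝ) :
    permMatAction π (x * y) = permMatAction π x * permMatAction π y :=
  rfl

theorem permMatAction_add {d : ℕ} (π : Equiv.Perm (Fin d)) (x y : Fin d → ℝ) :
    permMatAction π (x + y) = permMatAction π x + permMatAction π y :=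
  rfl

theorem prevBlocks_map {d k : ℕ} (f : (Fin d → ℝ) → Fin d → ℝ) (x : Fin k → Fin d → ℝ)
    (i : Fin k) : prevBlocks (fun l => f (x l)) i = fun j => f (prevBlocks x i j) :=
  rfl

/-- `G`-Inverse Autoregressive Flow layers are `G`-equivariant: if `G` acts on each
block `ℝᵈ` of `ℝⁿ = (ℝᵈ)ᵏ` by permutation matrices (via `ρ`) and the blockwise scale
and translation maps `sᵢ, tᵢ` (depending only on preceding blocks) are `G`-equivariant,
then the IAF layer `I(x)⁽ⁱ⁾ = sᵢ(x⁽¹⁾,…,x⁽ⁱ⁻¹⁾) ⊙ x⁽ⁱ⁾ + tᵢ(x⁽¹⁾,…,x⁽ⁱ⁻¹⁾)` is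
`G`-equivariant. -/
theorem g_iaf_layer_equivariant
    {G : Type*} [Group G] {d k : ℕ}
    (ρ : G →* Equiv.Perm (Fin d))
    (s t : (i : Fin k) → (Fin i → Fin d → ℝ) → (Fin d → ℝ))
    (hs : ∀ (g : G) (i : Fin k) (xs : Fin i → Fin d → ℝ),
      s i (fun j => permMatAction (ρ g) (xs j)) = permMatAction (ρ g) (s i xs))
    (ht : ∀ (g : G) (i : Fin k) (xs : Fin i → Fin d → ℝ),
      t i (fun j => permMatAction (ρ g) (xs j)) = permMatAction (ρ g) (t i xs))
    (I : (Fin k → Fin d → ℝ) → (Fin k → Fin d → ℝ))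
    (hI : ∀ (x : Fin k → Fin d → ℝ) (i : Fin k),
      I x i = s i (prevBlocks x i) * x i + t i (prevBlocks x i)) :
    ∀ (g : G) (x : Fin k → Fin d → ℝ),
      I (fun i => permMatAction (ρ g) (x i)) = fun i => permMatAction (ρ g) (I x i) := by
  intro g x
  funext i
  rw [hI, hI, prevBlocks_map, hs, ht, permMatAction_add, permMatAction_mul]
end
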